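/- arXiv:1609.07496 — 4 statements merged into one kernel-verified Lean document; each statement's English description precedes it below -/
import Mathlib

section
/- Let M_t(X) = e^{itθ + tL}(X) where θ(X) = -[H_eff, X] for a Hermitian matrix H_eff commuting with a positive definite density matrix Ω, L satisfies quantum detailed balance with respect to Ω, and θ and L commute as superoperators. Then the Petz recovery map of M_t with respect to Ω is M̃_t(X) = e^{-itθ + tL}(X); in particular M̃_t(M_t(X)) = e^{2tL}(X). -/
open Matrix
open scoped ComplexOrder

attribute [local instance] Matrix.frobeniusNormedAddCommGroup Matrix.frobeniusNormedSpace

instance matrixCLMIsTopologicalRing {d : ℕ} :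
    IsTopologicalRing (Matrix (Fin d) (Fin d) ℂ →L[ℂ] Matrix (Fin d) (Fin d) ℂ) :=
  @NonUnitalSeminormedRing.toIsTopologicalRing _
    (@ContinuousLinearMap.toNormedRing ℂ (Matrix (Fin d) (Fin d) ℂ)
      Matrix.frobeniusNormedAddCommGroup _ Matrix.frobeniusNormedSpace).toNonUnitalNormedRing.toNonUnitalSeminormedRing

/-!
The Hilbert–Schmidt adjoint of `e^{t(iθ + L)}` is `e^{t(-iθ + L†)}`: `θ` is self-adjoint because
`H_eff` is Hermitian, and adjoints pass term by term through the exponential series. The sandwich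
`X ↦ Ω^{1/2} X Ω^{1/2}` commutes with `θ` (as `H_eff` commutes with `Ω`) and, by detailed balance,
conjugates `L†` into `L`; conjugating the exponential therefore gives the Petz map
`e^{t(-iθ + L)}`. Since `θ` and `L` commute, `e^{t(-iθ + L)} e^{t(iθ + L)} = e^{2tL}`.
-/

namespace Matrix

variable {n : Type*} [Fintype n]

/- The Frobenius norm is only a local instance, so instance search does not find the Banach
algebra structure on superoperators; it is assembled here. -/

noncomputable instance clmNormedRing : NormedRing (Matrix n n ℂ →L[ℂ] Matrix n n ℂ) :=
  @ContinuousLinearMap.toNormedRing ℂ _ frobeniusNormedAddCommGroup _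
    frobeniusNormedSpace

noncomputable instance clmNormedAlgebra :
    NormedAlgebra ℂ (Matrix n n ℂ →L[ℂ] Matrix n n ℂ) :=
  @ContinuousLinearMap.toNormedAlgebra ℂ _ _ _ frobeniusNormedSpace

instance clmIsTopologicalRing :
    IsTopologicalRing (Matrix n n ℂ →L[ℂ] Matrix n n ℂ) :=
  clmNormedRing.toNonUnitalNormedRing.toNonUnitalSeminormedRing.toIsTopologicalRing

instance clmIsScalarTower :
    IsScalarTower ℂ (Matrix n n ℂ →L[ℂ] Matrix n n ℂ) (Matrix n n ℂ →L[ℂ] Matrix n n ℂ) :=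
  IsScalarTower.right

instance clmSMulCommClass :
    SMulCommClass ℂ (Matrix n n ℂ →L[ℂ] Matrix n n ℂ) (Matrix n n ℂ →L[ℂ] Matrix n n ℂ) :=
  Algebra.to_smulCommClass

instance clmIsScalarTowerReal :
    IsScalarTower ℝ (Matrix n n ℂ →L[ℂ] Matrix n n ℂ) (Matrix n n ℂ →L[ℂ] Matrix n n ℂ) :=
  ⟨fun _ _ _ => rfl⟩

instance clmSMulCommClassReal :
    SMulCommClass ℝ (Matrix n n ℂ →L[ℂ] Matrix n n ℂ) (Matrix n n ℂ →L[ℂ] Matrix n n ℂ) :=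
  ⟨fun t f g => ContinuousLinearMap.ext fun X => (f.map_smul_of_tower t (g X)).symm⟩

noncomputable instance clmNormedAlgebraRat :
    NormedAlgebra ℚ (Matrix n n ℂ →L[ℂ] Matrix n n ℂ) :=
  .restrictScalars ℚ ℂ _

instance clmCompleteSpace :
    @CompleteSpace (Matrix n n ℂ →L[ℂ] Matrix n n ℂ) clmNormedRing.toUniformSpace :=
  have : FiniteDimensional ℂ (Matrix n n ℂ →L[ℂ] Matrix n n ℂ) :=
    .equiv LinearMap.toContinuousLinearMap
  have := @FiniteDimensional.proper ℂ _ _ { clmNormedRing with }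
    clmNormedAlgebra.toNormedSpace _ this
  complete_of_proper

section Hermitian

variable [DecidableEq n]

lemma IsHermitian.cfc_mul_cfc_eq_one {A : Matrix n n ℂ} (hA : A.IsHermitian) {f g : ℝ → ℝ}
    (hfg : ∀ i, f (hA.eigenvalues i) * g (hA.eigenvalues i) = 1) :
    hA.cfc f * hA.cfc g = 1 := by
  have hfin := (spectrum ℝ A).toFinite
  rw [← hA.cfc_eq, ← hA.cfc_eq, ← cfc_mul f g A (hfin.continuousOn f) (hfin.continuousOn g),
    ← cfc_one ℝ A]
  refine cfc_congr fun x hx => ?_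
  obtain ⟨i, rfl⟩ := hA.spectrum_real_eq_range_eigenvalues ▸ hx
  exact hfg i

lemma IsHermitian.commute_cfc {A B : Matrix n n ℂ} (hA : A.IsHermitian) (hAB : Commute B A)
    (f : ℝ → ℝ) : Commute B (hA.cfc f) := by
  rw [← hA.cfc_eq]
  exact (hAB.symm.cfc_real f).symm

noncomputable def PosDef.sqrtUnit {A : Matrix n n ℂ} (hA : A.PosDef) : (Matrix n n ℂ)ˣ where
  val := hA.1.cfc Real.sqrt
  inv := hA.1.cfc fun x => (Real.sqrt x)⁻¹
  val_inv := hA.1.cfc_mul_cfc_eq_one fun i =>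
    mul_inv_cancel₀ (Real.sqrt_pos.mpr (hA.eigenvalues_pos i)).ne'
  inv_val := hA.1.cfc_mul_cfc_eq_one fun i =>
    inv_mul_cancel₀ (Real.sqrt_pos.mpr (hA.eigenvalues_pos i)).ne'

end Hermitian

noncomputable def sandwich (P Q : Matrix n n ℂ) : Matrix n n ℂ →L[ℂ] Matrix n n ℂ :=
  LinearMap.toContinuousLinearMap
    { toFun X := P * X * Q
      map_add' X Y := by simp only [Matrix.mul_add, Matrix.add_mul]
      map_smul' c X := by simp only [Matrix.mul_smul, Matrix.smul_mul, RingHom.id_apply] }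

@[simp]
lemma sandwich_apply (P Q X : Matrix n n ℂ) : sandwich P Q X = P * X * Q := rfl

lemma sandwich_mul_sandwich (P Q P' Q' : Matrix n n ℂ) :
    sandwich P Q * sandwich P' Q' = sandwich (P * P') (Q' * Q) := by
  ext1 X
  simp only [mul_apply_eq_comp, sandwich_apply, Matrix.mul_assoc]

lemma sandwich_one [DecidableEq n] : sandwich (1 : Matrix n n ℂ) 1 = 1 := by
  ext1 X
  simp

noncomputable def sandwichUnit [DecidableEq n] (u v : (Matrix n n ℂ)ˣ) :
    (Matrix n n ℂ →L[ℂ] Matrix n n ℂ)ˣ where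
  val := sandwich u v
  inv := sandwich ↑u⁻¹ ↑v⁻¹
  val_inv := by simp [sandwich_mul_sandwich, sandwich_one]
  inv_val := by simp [sandwich_mul_sandwich, sandwich_one]

lemma commute_sandwich_of_eq_neg_commutator {H P Q : Matrix n n ℂ}
    {θ : Matrix n n ℂ →L[ℂ] Matrix n n ℂ} (hθ : ∀ X, θ X = -(H * X - X * H))
    (hP : Commute H P) (hQ : Commute H Q) : Commute θ (sandwich P Q) := by
  ext1 X
  simp only [mul_apply_eq_comp, sandwich_apply, hθ, Matrix.mul_neg, Matrix.neg_mul,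
    Matrix.mul_sub, Matrix.sub_mul, ← Matrix.mul_assoc, hP.eq]
  simp only [Matrix.mul_assoc, hQ.eq]

lemma trace_conjTranspose_mul_eq_star (A B : Matrix n n ℂ) :
    (Aᴴ * B).trace = star (Bᴴ * A).trace := by
  rw [← trace_conjTranspose, conjTranspose_mul, conjTranspose_conjTranspose]

noncomputable def tracePairing (A B : Matrix n n ℂ) :
    (Matrix n n ℂ →L[ℂ] Matrix n n ℂ) →L[ℂ] ℂ :=
  LinearMap.toContinuousLinearMap
    { toFun T := (Aᴴ * T B).trace
      map_add' T T' := by simp only [_root_.add_apply, Matrix.mul_add, trace_add]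
      map_smul' c T := by simp only [_root_.smul_apply, Matrix.mul_smul, trace_smul,
        RingHom.id_apply] }

@[simp]
lemma tracePairing_apply (A B : Matrix n n ℂ) (T : Matrix n n ℂ →L[ℂ] Matrix n n ℂ) :
    tracePairing A B T = (Aᴴ * T B).trace := rfl

def IsTraceAdjoint (Φ Ψ : Matrix n n ℂ →L[ℂ] Matrix n n ℂ) : Prop :=
  ∀ A B, (Aᴴ * Φ B).trace = ((Ψ A)ᴴ * B).trace

namespace IsTraceAdjoint

variable {Φ Ψ Φ' Ψ' : Matrix n n ℂ →L[ℂ] Matrix n n ℂ}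

lemma add (h : IsTraceAdjoint Φ Ψ) (h' : IsTraceAdjoint Φ' Ψ') :
    IsTraceAdjoint (Φ + Φ') (Ψ + Ψ') := fun A B => by
  simp only [_root_.add_apply, Matrix.mul_add, conjTranspose_add, Matrix.add_mul, trace_add, h A B,
    h' A B]

lemma smul (h : IsTraceAdjoint Φ Ψ) (c : ℂ) : IsTraceAdjoint (c • Φ) (star c • Ψ) := fun A B => by
  simp only [_root_.smul_apply, Matrix.mul_smul, conjTranspose_smul, star_star, Matrix.smul_mul,
    trace_smul, h A B]

lemma real_smul (h : IsTraceAdjoint Φ Ψ) (t : ℝ) : IsTraceAdjoint (t • Φ) (t • Ψ) :=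
  fun A B => by
  simp only [_root_.smul_apply, Matrix.mul_smul, conjTranspose_smul, star_trivial,
    Matrix.smul_mul, trace_smul, h A B]

lemma mul (h : IsTraceAdjoint Φ Ψ) (h' : IsTraceAdjoint Φ' Ψ') :
    IsTraceAdjoint (Φ * Φ') (Ψ' * Ψ) := fun A B => by
  simp only [mul_apply_eq_comp, h A, h' _ B]

lemma one : IsTraceAdjoint (1 : Matrix n n ℂ →L[ℂ] Matrix n n ℂ) 1 :=
  fun _ _ => rfl

lemma pow (h : IsTraceAdjoint Φ Ψ) (k : ℕ) : IsTraceAdjoint (Φ ^ k) (Ψ ^ k) := by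
  induction k with
  | zero => simpa only [pow_zero] using one
  | succ k ih =>
    rw [pow_succ, pow_succ']
    exact ih.mul h

lemma exp (h : IsTraceAdjoint Φ Ψ) :
    IsTraceAdjoint (NormedSpace.exp Φ) (NormedSpace.exp Ψ) :=
  fun A B => by
  have hΦ := (tracePairing A B).hasSum (NormedSpace.exp_series_hasSum_exp' (𝕂 := ℂ) Φ)
  have hΨ := ((tracePairing B A).hasSum (NormedSpace.exp_series_hasSum_exp' (𝕂 := ℂ) Ψ)).star
  rw [trace_conjTranspose_mul_eq_star (NormedSpace.exp Ψ A)]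
  refine hΦ.unique (hΨ.congr_fun fun k => ?_)
  simp only [tracePairing_apply, ← trace_conjTranspose_mul_eq_star]
  have := (h.pow k).smul (k.factorial : ℂ)⁻¹ A B
  rwa [star_inv₀, star_natCast] at this

lemma unique (h : IsTraceAdjoint Φ Ψ) (h' : IsTraceAdjoint Φ Ψ') : Ψ = Ψ' := by
  ext1 A
  rw [← sub_eq_zero, ← trace_conjTranspose_mul_self_eq_zero_iff, conjTranspose_sub,
    Matrix.sub_mul, trace_sub, ← h, ← h', sub_self]

end IsTraceAdjoint

lemma isTraceAdjoint_self_of_eq_neg_commutator {H : Matrix n n ℂ} (hH : H.IsHermitian)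
    {θ : Matrix n n ℂ →L[ℂ] Matrix n n ℂ} (hθ : ∀ X, θ X = -(H * X - X * H)) :
    IsTraceAdjoint θ θ := fun A B => by
  simp only [hθ, conjTranspose_neg, conjTranspose_sub, conjTranspose_mul, hH.eq, Matrix.mul_neg,
    Matrix.neg_mul, Matrix.mul_sub, Matrix.sub_mul, trace_neg, trace_sub, ← Matrix.mul_assoc]
  rw [trace_mul_cycle Aᴴ B H]

end Matrix

theorem petz_recovery_with_unitary_part_general {d : ℕ}
    (Ω Heff : Matrix (Fin d) (Fin d) ℂ) (hΩ : Ω.PosDef)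
    (hH : Heff.IsHermitian) (hcommΩ : Heff * Ω = Ω * Heff)
    (θ L Ldag : Matrix (Fin d) (Fin d) ℂ →L[ℂ] Matrix (Fin d) (Fin d) ℂ)
    (hθ : ∀ X, θ X = -(Heff * X - X * Heff))
    (hadj : ∀ A B, (Aᴴ * L B).trace = ((Ldag A)ᴴ * B).trace)
    (hQDB : ∀ X, L X = hΩ.1.cfc Real.sqrt
        * Ldag ((hΩ.1.cfc fun x => (Real.sqrt x)⁻¹) * X * (hΩ.1.cfc fun x => (Real.sqrt x)⁻¹))
        * hΩ.1.cfc Real.sqrt)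
    (hcomm : ∀ X, θ (L X) = L (θ X))
    -- `Mdag t` is the Hilbert–Schmidt adjoint of `M_t = e^{itθ + tL}`
    (Mdag : ℝ → Matrix (Fin d) (Fin d) ℂ →L[ℂ] Matrix (Fin d) (Fin d) ℂ)
    (hMdag : ∀ (t : ℝ) A B,
      (Aᴴ * (NormedSpace.exp (t • (Complex.I • θ + L))) B).trace
        = ((Mdag t A)ᴴ * B).trace) :
    ∀ (t : ℝ) (X),
      (hΩ.1.cfc Real.sqrt
          * Mdag t ((hΩ.1.cfc fun x => (Real.sqrt x)⁻¹) * X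
              * (hΩ.1.cfc fun x => (Real.sqrt x)⁻¹))
          * hΩ.1.cfc Real.sqrt
        = (NormedSpace.exp (t • ((-Complex.I) • θ + L))) X)
      ∧ (NormedSpace.exp (t • ((-Complex.I) • θ + L)))
            ((NormedSpace.exp (t • (Complex.I • θ + L))) X)
          = (NormedSpace.exp ((2 * t) • L)) X := by
  intro t X
  set U := sandwichUnit hΩ.sqrtUnit hΩ.sqrtUnit
  have hθU : Commute θ U := commute_sandwich_of_eq_neg_commutator hθ
    (hΩ.1.commute_cfc hcommΩ _) (hΩ.1.commute_cfc hcommΩ _)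
  have hLdagU : ↑U * Ldag * ↑U⁻¹ = L := ContinuousLinearMap.ext fun X => (hQDB X).symm
  have hexp : NormedSpace.exp (t • ((-Complex.I) • θ + L))
      = ↑U * NormedSpace.exp (t • ((-Complex.I) • θ + Ldag)) * ↑U⁻¹ := by
    have hconj : ↑U * (t • ((-Complex.I) • θ + Ldag)) * ↑U⁻¹ = t • ((-Complex.I) • θ + L) := by
      rw [mul_smul_comm, smul_mul_assoc, mul_add, add_mul, mul_smul_comm, smul_mul_assoc, hLdagU,
        ← hθU.eq, Units.mul_inv_cancel_right]
    exact hconj ▸ NormedSpace.exp_units_conj U _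
  have hMdag_eq : Mdag t = NormedSpace.exp (t • ((-Complex.I) • θ + Ldag)) := by
    refine IsTraceAdjoint.unique (hMdag t) ?_
    simpa only [neg_smul, RCLike.star_def, Complex.conj_I] using
      ((((isTraceAdjoint_self_of_eq_neg_commutator hH hθ).smul Complex.I).add hadj).real_smul t).exp
  have hθL : Commute θ L := ContinuousLinearMap.ext hcomm
  have hgen : Commute ((-Complex.I) • θ + L) (Complex.I • θ + L) :=
    .add_left (.add_right (((Commute.refl θ).smul_left _).smul_right _) (hθL.smul_left _))
      (.add_right (hθL.symm.smul_right _) (.refl L))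
  refine ⟨?_, ?_⟩
  · rw [hexp, ← hMdag_eq]
    rfl
  · rw [show (2 * t) • L = t • ((-Complex.I) • θ + L) + t • (Complex.I • θ + L) by module]
    exact congrArg (· X) (NormedSpace.exp_add_of_commute ((hgen.smul_left t).smul_right t)).symm

/-- For `M_t = e^{itθ + tL}` with `θ(X) = -[H_eff, X]`, `H_eff` Hermitian and commuting with
the positive definite fixed point `Ω`, `L` satisfying quantum detailed balance w.r.t. `Ω`,
and `θ∘L = L∘θ`, the Petz recovery map of `M_t` with reference state `Ω` is
`M̃_t = e^{-itθ + tL}`; in particular `M̃_t(M_t(X)) = e^{2tL}(X)`. -/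
theorem petz_recovery_with_unitary_part {d : ℕ}
    (Ω Heff : Matrix (Fin d) (Fin d) ℂ) (hΩ : Ω.PosDef) (hΩtr : Ω.trace = 1)
    (hH : Heff.IsHermitian) (hcommΩ : Heff * Ω = Ω * Heff)
    (θ L Ldag : Matrix (Fin d) (Fin d) ℂ →L[ℂ] Matrix (Fin d) (Fin d) ℂ)
    (hθ : ∀ X, θ X = -(Heff * X - X * Heff))
    (hadj : ∀ A B, (Aᴴ * L B).trace = ((Ldag A)ᴴ * B).trace)
    (hfix : L Ω = 0)
    (hQDB : ∀ X, L X = hΩ.1.cfc Real.sqrt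
        * Ldag ((hΩ.1.cfc fun x => (Real.sqrt x)⁻¹) * X * (hΩ.1.cfc fun x => (Real.sqrt x)⁻¹))
        * hΩ.1.cfc Real.sqrt)
    (hcomm : ∀ X, θ (L X) = L (θ X))
    -- `Mdag t` is the Hilbert–Schmidt adjoint of `M_t = e^{itθ + tL}`
    (Mdag : ℝ → Matrix (Fin d) (Fin d) ℂ →L[ℂ] Matrix (Fin d) (Fin d) ℂ)
    (hMdag : ∀ (t : ℝ) A B,
      (Aᴴ * (NormedSpace.exp (t • (Complex.I • θ + L))) B).trace
        = ((Mdag t A)ᴴ * B).trace) :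
    ∀ (t : ℝ) (X),
      (hΩ.1.cfc Real.sqrt
          * Mdag t ((hΩ.1.cfc fun x => (Real.sqrt x)⁻¹) * X
              * (hΩ.1.cfc fun x => (Real.sqrt x)⁻¹))
          * hΩ.1.cfc Real.sqrt
        = (NormedSpace.exp (t • ((-Complex.I) • θ + L))) X)
      ∧ (NormedSpace.exp (t • ((-Complex.I) • θ + L)))
            ((NormedSpace.exp (t • (Complex.I • θ + L))) X)
          = (NormedSpace.exp ((2 * t) • L)) X :=
  petz_recovery_with_unitary_part_general Ω Heff hΩ hH hcommΩ θ L Ldag hθ hadj hQDB hcomm Mdag hMdag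
end

section
/- Consider the classical two-state (qubit diagonal) Davies evolution p(t) = q + (p(0) − q)e^{−At} with A > 0, 0 < q < 1, 0 < p(0) < 1, corresponding to a thermal fixed point (q, 1−q). Define the classical relative entropy d(p‖r) = p log(p/r) + (1−p)log((1−p)/(1−r)) and g(t,k) = d(p(0)‖q) − d(p(t)‖q) − d(p(0)‖p(kt)). Then with x = e^{−At}, as x → 0: g = (p(0)−q)²/(q(1−q)) · (x^k − x²/2) + O(x³). In particular, for every k > 2 there exists t₀ such that g(t,k) < 0 for all t > t₀, while for k = 2, g(t,2) > 0 for all sufficiently large t (assuming p(0) ≠ q). -/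
/-!
Write `x = e^{-At}`, so that `p(t) = q + (p₀ - q) x` and `p(kt) = q + (p₀ - q) x^k`.
Near `r = q` the difference `d(p₀‖q) - d(p₀‖r)` is linear,
`(p₀ - q)(r - q)/(q(1-q)) + O((r-q)²)`, while `d(q + u‖q) = u²/(2q(1-q)) + O(u³)`; both come
from the Taylor expansion of `log (1 + x)` at `0`. Hence `g = M (x^k - x²/2) + O(x³)` with
`M = (p₀ - q)²/(q(1-q)) > 0`. For `k > 2` the term `-M x²/2` dominates, while for `k = 2` the
sum is `M x²/2 > 0`.
-/

open Filter
open scoped Topology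

noncomputable def dKL (p r : ℝ) : ℝ :=
  p * Real.log (p / r) + (1 - p) * Real.log ((1 - p) / (1 - r))

open Real Asymptotics

lemma isBigO_sum_range_add_log_one_sub (n : ℕ) :
    (fun x : ℝ => ∑ i ∈ Finset.range n, x ^ (i + 1) / (i + 1) + log (1 - x))
      =O[𝓝 0] fun x => x ^ (n + 1) := by
  refine IsBigO.of_bound 2 ?_
  filter_upwards [Ioo_mem_nhds (by norm_num : -(1 / 2 : ℝ) < 0) (by norm_num : (0 : ℝ) < 1 / 2)]
    with x hx
  have hx' : |x| ≤ 1 / 2 := abs_le.2 ⟨hx.1.le, hx.2.le⟩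
  rw [norm_pow, Real.norm_eq_abs, Real.norm_eq_abs]
  calc _ ≤ |x| ^ (n + 1) / (1 - |x|) := abs_log_sub_add_sum_range_le (by linarith) n
    _ ≤ 2 * |x| ^ (n + 1) := by
      rw [div_le_iff₀ (by linarith)]
      nlinarith [pow_nonneg (abs_nonneg x) (n + 1)]

lemma tendsto_neg_nhds_zero : Tendsto (fun x : ℝ => -x) (𝓝 0) (𝓝 0) := by
  simpa using (continuous_neg.tendsto (0 : ℝ))

lemma isBigO_log_one_add_sub_self :
    (fun x : ℝ => log (1 + x) - x) =O[𝓝 0] fun x => x ^ 2 :=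
  ((isBigO_sum_range_add_log_one_sub 1).comp_tendsto tendsto_neg_nhds_zero).congr
    (fun x => by simp; ring) (fun x => by simp)

lemma isBigO_log_one_add_sub_sub_sq :
    (fun x : ℝ => log (1 + x) - (x - x ^ 2 / 2)) =O[𝓝 0] fun x => x ^ 3 :=
  ((isBigO_sum_range_add_log_one_sub 2).comp_tendsto tendsto_neg_nhds_zero).congr
    (fun x => by simp [Finset.sum_range_succ]; ring) (fun x => by simp; ring) |>.of_neg_right

lemma isBigO_one_add_mul_log_one_add_sub :
    (fun x : ℝ => (1 + x) * log (1 + x) - (x + x ^ 2 / 2)) =O[𝓝 0] fun x => x ^ 3 :=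
  (isBigO_log_one_add_sub_sub_sq.add (((isBigO_refl (fun x : ℝ => x) _).mul
    isBigO_log_one_add_sub_self).congr_right fun x => by ring)).congr_left fun x => by ring

lemma Asymptotics.IsBigO.comp_const_mul {f : ℝ → ℝ} {n : ℕ} (hf : f =O[𝓝 0] fun x => x ^ n)
    (a : ℝ) :
    (fun x => f (a * x)) =O[𝓝 0] fun x => x ^ n := by
  refine (hf.comp_tendsto ((continuous_const_mul a).tendsto' 0 0 (mul_zero a))).trans ?_
  simp only [Function.comp_def, mul_pow]
  exact (isBigO_refl _ _).const_mul_left _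

lemma mul_log_div_sub_mul_log_div (a : ℝ) {b c : ℝ} (hb : b ≠ 0) (hc : c ≠ 0) :
    a * log (a / b) - a * log (a / c) = a * log (c / b) := by
  rcases eq_or_ne a 0 with rfl | ha
  · simp
  · rw [log_div ha hb, log_div ha hc, log_div hc hb]; ring

lemma dKL_sub_dKL (p : ℝ) {q r : ℝ} (hq : q ≠ 0) (hq' : 1 - q ≠ 0) (hr : r ≠ 0)
    (hr' : 1 - r ≠ 0) :
    dKL p q - dKL p r = p * log (r / q) + (1 - p) * log ((1 - r) / (1 - q)) := by
  rw [← mul_log_div_sub_mul_log_div p hq hr, ← mul_log_div_sub_mul_log_div (1 - p) hq' hr']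
  unfold dKL
  ring

lemma ratio_eq_one_add_inv_mul {q : ℝ} (hq : q ≠ 0) (hq' : 1 - q ≠ 0) (u : ℝ) :
    (q + u) / q = 1 + q⁻¹ * u ∧ (1 - (q + u)) / (1 - q) = 1 + -(1 - q)⁻¹ * u := by
  constructor
  · field_simp
  · field_simp; ring

lemma isBigO_dKL_add_left_sub_sq {q : ℝ} (hq : q ≠ 0) (hq' : 1 - q ≠ 0) :
    (fun u => dKL (q + u) q - u ^ 2 / (2 * (q * (1 - q)))) =O[𝓝 0] fun u => u ^ 3 := by
  have h := isBigO_one_add_mul_log_one_add_sub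
  refine (((h.comp_const_mul q⁻¹).const_mul_left q).add
    ((h.comp_const_mul (-(1 - q)⁻¹)).const_mul_left (1 - q))).congr_left (fun u => ?_)
  obtain ⟨e, e'⟩ := ratio_eq_one_add_inv_mul hq hq' u
  simp only [dKL, e, e']
  field_simp
  ring

lemma isBigO_dKL_sub_dKL_add_right_sub (p : ℝ) {q : ℝ} (hq : q ≠ 0) (hq' : 1 - q ≠ 0) :
    (fun u => dKL p q - dKL p (q + u) - (p - q) / (q * (1 - q)) * u)
      =O[𝓝 0] fun u => u ^ 2 := by
  have h := isBigO_log_one_add_sub_self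
  refine (((h.comp_const_mul q⁻¹).const_mul_left p).add
    ((h.comp_const_mul (-(1 - q)⁻¹)).const_mul_left (1 - p))).congr' ?_ EventuallyEq.rfl
  have hr : ∀ᶠ u in 𝓝 (0 : ℝ), (q + u) * (1 - (q + u)) ≠ 0 :=
    ContinuousAt.eventually_ne (by fun_prop) (by simpa using mul_ne_zero hq hq')
  filter_upwards [hr] with u hu
  obtain ⟨hr, hr'⟩ := mul_ne_zero_iff.1 hu
  obtain ⟨e, e'⟩ := ratio_eq_one_add_inv_mul hq hq' u
  rw [dKL_sub_dKL p hq hq' hr hr', e, e']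
  field_simp
  ring

lemma tendsto_rpow_nhdsGT_zero {k : ℝ} (hk : 0 < k) :
    Tendsto (fun x : ℝ => x ^ k) (𝓝[>] 0) (𝓝 0) := by
  have h := (continuousAt_rpow_const 0 k (Or.inr hk.le)).tendsto
  rw [zero_rpow hk.ne'] at h
  exact h.mono_left nhdsWithin_le_nhds

lemma isBigO_rpow_sq_nhdsGT {k : ℝ} (hk : 3 ≤ 2 * k) :
    (fun x : ℝ => (x ^ k) ^ 2) =O[𝓝[>] 0] fun x => x ^ 3 := by
  refine IsBigO.of_bound 1 ?_
  filter_upwards [Ioo_mem_nhdsGT (zero_lt_one' ℝ)] with x ⟨hx0, hx1⟩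
  rw [one_mul, norm_of_nonneg (by positivity), norm_of_nonneg (by positivity),
    ← rpow_mul_natCast hx0.le, ← rpow_natCast]
  exact rpow_le_rpow_of_exponent_ge hx0 hx1.le (by push_cast; linarith)

lemma isLittleO_rpow_sq_nhdsGT {k : ℝ} (hk : 2 < k) :
    (fun x : ℝ => x ^ k) =o[𝓝[>] 0] fun x => x ^ 2 := by
  refine ((isBigO_refl (fun x : ℝ => x ^ 2) _).mul_isLittleO
    ((isLittleO_one_iff ℝ).2 (tendsto_rpow_nhdsGT_zero (sub_pos.2 hk)))).congr' ?_ (by simp)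
  filter_upwards [self_mem_nhdsWithin] with x hx
  rw [← rpow_two, ← rpow_add hx]
  ring_nf

/-- The paper's `g(t, k)` in the variable `x = e^{-At}`. -/
noncomputable def freeEnergyGap (p q k x : ℝ) : ℝ :=
  dKL p q - dKL (q + (p - q) * x) q - dKL p (q + (p - q) * x ^ k)

lemma isBigO_freeEnergyGap_sub {q : ℝ} (hq : q ≠ 0) (hq' : 1 - q ≠ 0) (p : ℝ) {k : ℝ}
    (hk : 3 ≤ 2 * k) :
    (fun x => freeEnergyGap p q k x - (p - q) ^ 2 / (q * (1 - q)) * (x ^ k - x ^ 2 / 2))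
      =O[𝓝[>] 0] fun x => x ^ 3 := by
  have hx : Tendsto (fun x : ℝ => (p - q) * x) (𝓝[>] 0) (𝓝 0) :=
    ((continuous_const_mul (p - q)).tendsto' 0 0 (mul_zero _)).mono_left nhdsWithin_le_nhds
  have hy : Tendsto (fun x : ℝ => (p - q) * x ^ k) (𝓝[>] 0) (𝓝 0) := by
    simpa using (tendsto_rpow_nhdsGT_zero (by linarith)).const_mul (p - q)
  have hquad := ((isBigO_dKL_add_left_sub_sq hq hq').comp_tendsto hx).trans
    (isBigO_refl (fun x : ℝ => x ^ 3) _ |>.const_mul_left ((p - q) ^ 3) |>.congr_left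
      fun x => by simp [mul_pow])
  have hlin := ((isBigO_dKL_sub_dKL_add_right_sub p hq hq').comp_tendsto hy).trans
    ((isBigO_rpow_sq_nhdsGT hk).const_mul_left ((p - q) ^ 2) |>.congr_left
      fun x => by simp [mul_pow])
  refine (hlin.sub hquad).congr_left fun x => ?_
  simp only [Function.comp_apply, freeEnergyGap]
  field_simp
  ring

lemma eventually_pos_of_isLittleO_sub_const_mul {α : Type*} {l : Filter α} {f h : α → ℝ} {a : ℝ}
    (ha : 0 < a) (hh : ∀ᶠ x in l, 0 < h x) (hf : (fun x => f x - a * h x) =o[l] h) :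
    ∀ᶠ x in l, 0 < f x := by
  filter_upwards [hf.bound (half_pos ha), hh] with x hx hhx
  rw [Real.norm_eq_abs, Real.norm_eq_abs, abs_of_pos hhx] at hx
  nlinarith [(abs_le.1 hx).1]

lemma eventually_sq_pos_nhdsGT : ∀ᶠ x : ℝ in 𝓝[>] 0, 0 < x ^ 2 := by
  filter_upwards [self_mem_nhdsWithin] with x hx using pow_pos hx 2

lemma isLittleO_pow_three_pow_two_nhdsGT : (fun x : ℝ => x ^ 3) =o[𝓝[>] 0] fun x => x ^ 2 :=
  (isLittleO_pow_pow (by norm_num)).mono nhdsWithin_le_nhds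

section sign

variable {p q : ℝ}

lemma sq_sub_div_mul_one_sub_pos (hq0 : 0 < q) (hq1 : q < 1) (hpq : p ≠ q) :
    0 < (p - q) ^ 2 / (q * (1 - q)) := by
  have := sub_ne_zero.2 hpq
  have : 0 < 1 - q := by linarith
  positivity

lemma eventually_freeEnergyGap_neg (hq0 : 0 < q) (hq1 : q < 1) (hpq : p ≠ q) {k : ℝ}
    (hk : 2 < k) : ∀ᶠ x in 𝓝[>] 0, freeEnergyGap p q k x < 0 := by
  have hE := (isBigO_freeEnergyGap_sub hq0.ne' (by linarith) p (k := k) (by linarith))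
    |>.trans_isLittleO isLittleO_pow_three_pow_two_nhdsGT
  have hM := sq_sub_div_mul_one_sub_pos hq0 hq1 hpq
  set M := (p - q) ^ 2 / (q * (1 - q))
  have hlead : (fun x => -freeEnergyGap p q k x - M / 2 * x ^ 2) =o[𝓝[>] 0] fun x => x ^ 2 :=
    (hE.add ((isLittleO_rpow_sq_nhdsGT hk).const_mul_left M)).neg_left.congr_left
      fun x => by ring
  filter_upwards [eventually_pos_of_isLittleO_sub_const_mul (half_pos hM)
    eventually_sq_pos_nhdsGT hlead] with x hx using neg_pos.1 hx

lemma eventually_freeEnergyGap_two_pos (hq0 : 0 < q) (hq1 : q < 1) (hpq : p ≠ q) :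
    ∀ᶠ x in 𝓝[>] 0, 0 < freeEnergyGap p q 2 x := by
  have hE := (isBigO_freeEnergyGap_sub hq0.ne' (by linarith) p (k := 2) (by norm_num))
    |>.trans_isLittleO isLittleO_pow_three_pow_two_nhdsGT
  exact eventually_pos_of_isLittleO_sub_const_mul
    (half_pos (sq_sub_div_mul_one_sub_pos hq0 hq1 hpq)) eventually_sq_pos_nhdsGT
    (hE.congr_left fun x => by rw [rpow_two]; ring)

end sign

theorem two_state_davies_tightness_general
    (A q p0 : ℝ) (hA : 0 < A) (hq0 : 0 < q) (hq1 : q < 1)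
    (hpq : p0 ≠ q)
    (pt : ℝ → ℝ) (hpt : ∀ t, pt t = q + (p0 - q) * Real.exp (-A * t))
    (g : ℝ → ℝ → ℝ)
    (hg : ∀ t k, g t k = dKL p0 q - dKL (pt t) q - dKL p0 (pt (k * t))) :
    (∀ k : ℝ, 2 < k →
      (fun t => g t k - (p0 - q) ^ 2 / (q * (1 - q))
          * (Real.exp (-A * t) ^ k - Real.exp (-A * t) ^ (2 : ℕ) / 2))
        =O[atTop] fun t => Real.exp (-A * t) ^ (3 : ℕ))
    ∧ (∀ k : ℝ, 2 < k → ∃ t₀ : ℝ, ∀ t > t₀, g t k < 0)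
    ∧ (∃ t₀ : ℝ, ∀ t > t₀, g t 2 > 0) := by
  have hx : Tendsto (fun t => exp (-A * t)) atTop (𝓝[>] 0) :=
    tendsto_exp_atBot_nhdsGT.comp (tendsto_id.const_mul_atTop_of_neg (neg_neg_of_pos hA))
  have hg' : ∀ k t, g t k = freeEnergyGap p0 q k (exp (-A * t)) := fun k t => by
    rw [hg, hpt, hpt, freeEnergyGap, ← exp_mul]; ring_nf
  have eventually_of_nhdsGT {P : ℝ → Prop} (hP : ∀ᶠ x in 𝓝[>] 0, P x) :
      ∃ t₀ : ℝ, ∀ t > t₀, P (exp (-A * t)) :=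
    (eventually_atTop.1 (hx.eventually hP)).imp fun _ h t ht => h t ht.le
  refine ⟨fun k hk => ?_, fun k hk => ?_, ?_⟩
  · simp_rw [hg' k]
    exact (isBigO_freeEnergyGap_sub hq0.ne' (by linarith) p0 (by linarith)).comp_tendsto hx
  · simp_rw [hg' k]
    exact eventually_of_nhdsGT (eventually_freeEnergyGap_neg hq0 hq1 hpq hk)
  · simp_rw [hg' 2]
    exact eventually_of_nhdsGT (eventually_freeEnergyGap_two_pos hq0 hq1 hpq)

/-- Tightness of the constant `2` for the classical two-state Davies evolution
`p(t) = q + (p(0) − q)e^{−At}`: with `x = e^{−At}` and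
`g(t,k) = d(p(0)‖q) − d(p(t)‖q) − d(p(0)‖p(kt))`, one has
`g = (p(0)−q)²/(q(1−q)) · (x^k − x²/2) + O(x³)` as `t → ∞`; hence for every `k > 2`
eventually `g(t,k) < 0`, while `g(t,2) > 0` for all sufficiently large `t`. -/
theorem two_state_davies_tightness
    (A q p0 : ℝ) (hA : 0 < A) (hq0 : 0 < q) (hq1 : q < 1)
    (hp0 : 0 < p0) (hp1 : p0 < 1) (hpq : p0 ≠ q)
    (pt : ℝ → ℝ) (hpt : ∀ t, pt t = q + (p0 - q) * Real.exp (-A * t))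
    (g : ℝ → ℝ → ℝ)
    (hg : ∀ t k, g t k = dKL p0 q - dKL (pt t) q - dKL p0 (pt (k * t))) :
    (∀ k : ℝ, 2 < k →
      (fun t => g t k - (p0 - q) ^ 2 / (q * (1 - q))
          * (Real.exp (-A * t) ^ k - Real.exp (-A * t) ^ (2 : ℕ) / 2))
        =O[atTop] fun t => Real.exp (-A * t) ^ (3 : ℕ))
    ∧ (∀ k : ℝ, 2 < k → ∃ t₀ : ℝ, ∀ t > t₀, g t k < 0)
    ∧ (∃ t₀ : ℝ, ∀ t > t₀, g t 2 > 0) :=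
  two_state_davies_tightness_general A q p0 hA hq0 hq1 hpq pt hpt g hg
end

section
/- Let Ω be a positive definite density matrix with spectral decomposition Ω = Σᵢ pᵢ|i⟩⟨i|, and let L be a superoperator that is time-translation symmetric with respect to Ω, i.e. L(Ω^{it} X Ω^{−it}) = Ω^{it} L(X) Ω^{−it} for all real t and all X. Then L preserves modes of coherence: for basis matrix units |n⟩⟨m|, the matrix element ⟨i|L(|n⟩⟨m|)|j⟩ vanishes unless pᵢ/pⱼ = pₙ/pₘ. -/
/-!
Conjugation by `Ω^{it}` multiplies `|n⟩⟨m|` by `(pₙ/pₘ)^{it}` and the `(i, j)` entry of any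
matrix by `(pᵢ/pⱼ)^{it}`, so the symmetry gives `c (pₙ/pₘ)^{it} = c (pᵢ/pⱼ)^{it}` for all real `t`,
where `c = ⟨i|L(|n⟩⟨m|)|j⟩`. If `c ≠ 0`, the characters `t ↦ e^{it log r}` of the two ratios
agree, and evaluating at the `t` where their phases differ by `π` shows the ratios are equal.
-/

open Matrix

open Complex in
theorem Complex.ofReal_cpow_I_mul {x : ℝ} (hx : 0 < x) (t : ℝ) :
    (x : ℂ) ^ (I * t) = exp (↑(t * Real.log x) * I) := by
  rw [cpow_def_of_ne_zero (ofReal_ne_zero.mpr hx.ne'), ← ofReal_log hx.le]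
  push_cast
  ring_nf

open Complex in
theorem Complex.ofReal_cpow_I_mul_mul_cpow_I_mul_neg {x y : ℝ} (hx : 0 < x) (hy : 0 < y) (t : ℝ) :
    (x : ℂ) ^ (I * t) * (y : ℂ) ^ (I * ↑(-t)) = exp (↑(t * Real.log (x / y)) * I) := by
  rw [ofReal_cpow_I_mul hx, ofReal_cpow_I_mul hy, ← exp_add, Real.log_div hx.ne' hy.ne']
  push_cast
  ring_nf

open Complex Real in
theorem Complex.eq_of_forall_exp_ofReal_mul_mul_I_eq {a b : ℝ}
    (h : ∀ t : ℝ, exp (↑(t * a) * I) = exp (↑(t * b) * I)) : a = b := by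
  by_contra hab
  have half_turn : π / (a - b) * a = π / (a - b) * b + π := by
    field_simp [sub_ne_zero.mpr hab]
    ring
  have h_neg := h (π / (a - b))
  rw [half_turn, ofReal_add, add_mul, exp_add, exp_pi_mul_I] at h_neg
  exact exp_ne_zero (↑(π / (a - b) * b) * I) (by linear_combination -h_neg / 2)

theorem Matrix.diagonal_mul_single_mul_diagonal {ι R : Type*} [Fintype ι] [DecidableEq ι]
    [CommSemiring R] (a b : ι → R) (k l : ι) (c : R) :
    diagonal a * single k l c * diagonal b = single k l (a k * c * b l) := by
  ext i j
  simp only [mul_diagonal, diagonal_mul, single_apply]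
  split_ifs with h
  · obtain ⟨rfl, rfl⟩ := h
    ring
  · simp

theorem Module.End.mul_apply_single_eq_of_map_diagonal_conj {ι R : Type*} [Fintype ι]
    [DecidableEq ι] [CommSemiring R] (L : Module.End R (Matrix ι ι R)) (a b : ι → R) (k l : ι)
    (hL : L (diagonal a * single k l 1 * diagonal b) = diagonal a * L (single k l 1) * diagonal b)
    (i j : ι) : a k * b l * L (single k l 1) i j = a i * b j * L (single k l 1) i j := by
  have := congr_fun₂ hL i j
  rw [diagonal_mul_single_mul_diagonal, mul_one, ← mul_one (a k * b l), ← smul_eq_mul,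
    ← smul_single, map_smul, Matrix.smul_apply, smul_eq_mul, mul_diagonal, diagonal_mul] at this
  rw [this]
  ring

theorem tts_preserves_modes_of_coherence_general {d : ℕ}
    (p : Fin d → ℝ) (hp : ∀ i, 0 < p i)
    (L : Module.End ℂ (Matrix (Fin d) (Fin d) ℂ))
    (Om : ℝ → Matrix (Fin d) (Fin d) ℂ)
    (hOm : ∀ t : ℝ, Om t = Matrix.diagonal fun i => ((p i : ℂ) ^ (Complex.I * (t : ℂ))))
    (hTTS : ∀ (t : ℝ) (X : Matrix (Fin d) (Fin d) ℂ),
      L (Om t * X * Om (-t)) = Om t * L X * Om (-t)) :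
    ∀ i j n m : Fin d, p i / p j ≠ p n / p m →
      L (Matrix.single n m (1 : ℂ)) i j = 0 := by
  intro i j n m hne
  by_contra hc
  have phases_eq : ∀ t : ℝ, Complex.exp (↑(t * Real.log (p n / p m)) * Complex.I) =
      Complex.exp (↑(t * Real.log (p i / p j)) * Complex.I) := fun t => by
    have entry_eq := L.mul_apply_single_eq_of_map_diagonal_conj _ _ n m
      (by simpa only [hOm] using hTTS t _) i j
    rw [mul_left_inj' hc] at entry_eq
    rwa [← Complex.ofReal_cpow_I_mul_mul_cpow_I_mul_neg (hp n) (hp m),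
      ← Complex.ofReal_cpow_I_mul_mul_cpow_I_mul_neg (hp i) (hp j)]
  exact hne (Real.log_injOn_pos (div_pos (hp i) (hp j)) (div_pos (hp n) (hp m))
    (Complex.eq_of_forall_exp_ofReal_mul_mul_I_eq phases_eq).symm)

/-- A time-translation symmetric superoperator preserves modes of coherence: if
`Ω = diag(p)` is positive definite and `L(Ω^{it} X Ω^{−it}) = Ω^{it} L(X) Ω^{−it}` for all
real `t`, then the matrix element `⟨i|L(|n⟩⟨m|)|j⟩` vanishes unless `pᵢ/pⱼ = pₙ/pₘ`. -/
theorem tts_preserves_modes_of_coherence {d : ℕ}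
    (p : Fin d → ℝ) (hp : ∀ i, 0 < p i) (hptr : ∑ i, p i = 1)
    (L : Module.End ℂ (Matrix (Fin d) (Fin d) ℂ))
    (Om : ℝ → Matrix (Fin d) (Fin d) ℂ)
    (hOm : ∀ t : ℝ, Om t = Matrix.diagonal fun i => ((p i : ℂ) ^ (Complex.I * (t : ℂ))))
    (hTTS : ∀ (t : ℝ) (X : Matrix (Fin d) (Fin d) ℂ),
      L (Om t * X * Om (-t)) = Om t * L X * Om (-t)) :
    ∀ i j n m : Fin d, p i / p j ≠ p n / p m →
      L (Matrix.single n m (1 : ℂ)) i j = 0 :=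
  tts_preserves_modes_of_coherence_general p hp L Om hOm hTTS
end

section
/- Let ρ and σ be density matrices on a finite-dimensional Hilbert space with σ positive definite. Then D(ρ‖σ) ≥ −2 log F(ρ, σ), where F(ρ,σ) = Tr[√(√σ ρ √σ)] is the quantum fidelity and D the quantum relative entropy (with D(ρ‖σ) = +∞ if supp ρ ⊄ supp σ, which does not occur here). -/
/-!
Diagonalise `ρ = ∑ aᵢ |uᵢ⟩⟨uᵢ|` and `σ = ∑ bⱼ |vⱼ⟩⟨vⱼ|` and put `wᵢⱼ = |⟨uᵢ, vⱼ⟩|²`, a doubly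
stochastic matrix. The Nussbaum–Szkoła distributions `Pᵢⱼ = wᵢⱼ aᵢ` and `Qᵢⱼ = wᵢⱼ bⱼ` reproduce
the relative entropy exactly, `D(ρ‖σ) = ∑ P (log P - log Q)`, while their Bhattacharyya coefficient
`∑ √(PQ) = Re Tr (√ρ √σ)` is at most the trace norm `‖√ρ √σ‖₁ = F(ρ, σ)`. The theorem thus reduces
to the classical inequality `KL(P‖Q) ≥ -2 log ∑ √(PQ)`, which is Jensen's inequality for `log`.
-/

open Matrix Real Finset
open scoped ComplexOrder

lemma Real.neg_two_log_sum_sqrt_mul_le {ι : Type*} [Fintype ι] (P Q : ι → ℝ)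
    (hP : ∀ i, 0 ≤ P i) (hP1 : ∑ i, P i = 1) (hQ : ∀ i, 0 < P i → 0 < Q i) :
    -2 * log (∑ i, √(P i * Q i)) ≤ ∑ i, P i * (log (P i) - log (Q i)) := by
  classical
  set t := univ.filter (fun i => 0 < P i)
  have sum_support (f : ι → ℝ) (hf : ∀ i, P i = 0 → f i = 0) : ∑ i ∈ t, f i = ∑ i, f i :=
    sum_filter_of_ne fun i _ hfi => (hP i).lt_of_ne' fun h => hfi (hf i h)
  have hmem {i} (hi : i ∈ t) : 0 < P i := (mem_filter.1 hi).2
  have hjensen := strictConcaveOn_log_Ioi.concaveOn.le_map_sum (t := t)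
    (p := fun i => √(Q i / P i)) (fun i _ => hP i) (by rwa [sum_support P fun i h => h])
    fun i hi => sqrt_pos.2 (div_pos (hQ i (hmem hi)) (hmem hi))
  have hlhs : ∑ i ∈ t, P i • log √(Q i / P i) = -(∑ i, P i * (log (P i) - log (Q i))) / 2 := by
    rw [← sum_support _ fun i h => by rw [h, zero_mul], neg_div, sum_div, ← sum_neg_distrib]
    refine sum_congr rfl fun i hi => ?_
    have hPi := hmem hi
    rw [smul_eq_mul, log_sqrt (div_pos (hQ i hPi) hPi).le, log_div (hQ i hPi).ne' hPi.ne']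
    ring
  have hrhs : ∑ i ∈ t, P i • √(Q i / P i) = ∑ i, √(P i * Q i) := by
    rw [← sum_support _ fun i h => by rw [h, zero_mul, sqrt_zero]]
    refine sum_congr rfl fun i hi => ?_
    rw [smul_eq_mul, sqrt_div' _ (hP i), mul_div_left_comm, div_sqrt, sqrt_mul (hP i), mul_comm]
  rw [hlhs, hrhs] at hjensen
  linarith

lemma Real.sum_sqrt_mul_pos {ι : Type*} [Fintype ι] (P Q : ι → ℝ) (hP1 : ∑ i, P i = 1)
    (hQ : ∀ i, 0 < P i → 0 < Q i) : 0 < ∑ i, √(P i * Q i) := by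
  obtain ⟨i, -, hi⟩ : ∃ i ∈ univ, (0 : ℝ) < P i :=
    exists_lt_of_sum_lt (by rw [hP1, sum_const_zero]; exact one_pos)
  exact sum_pos' (fun j _ => sqrt_nonneg _) ⟨i, mem_univ i, sqrt_pos.2 (mul_pos hi (hQ i hi))⟩

namespace Matrix

section

variable {𝕜 m n : Type*} [RCLike 𝕜]

lemma mul_conjTranspose_self_apply_self [Fintype n] (M : Matrix m n 𝕜) (i : m) :
    (M * Mᴴ) i i = ((∑ j, ‖M i j‖ ^ 2 : ℝ) : 𝕜) := by
  simp only [mul_apply, conjTranspose_apply, ← starRingEnd_apply, RCLike.mul_conj]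
  push_cast
  rfl

lemma conjTranspose_mul_self_apply_self [Fintype m] (M : Matrix m n 𝕜) (j : n) :
    (Mᴴ * M) j j = ((∑ i, ‖M i j‖ ^ 2 : ℝ) : 𝕜) := by
  simpa using mul_conjTranspose_self_apply_self Mᴴ j

end

variable {𝕜 n : Type*} [RCLike 𝕜] [Fintype n] [DecidableEq n] {A B : Matrix n n 𝕜}

namespace IsHermitian

lemma cfc_eq_mul_diagonal_mul (hA : A.IsHermitian) (f : ℝ → ℝ) :
    hA.cfc f = (hA.eigenvectorUnitary : Matrix n n 𝕜) *
      diagonal (fun i => (f (hA.eigenvalues i) : 𝕜)) *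
        star (hA.eigenvectorUnitary : Matrix n n 𝕜) :=
  rfl

lemma trace_cfc (hA : A.IsHermitian) (f : ℝ → ℝ) :
    (hA.cfc f).trace = ((∑ i, f (hA.eigenvalues i) : ℝ) : 𝕜) := by
  rw [cfc_eq_mul_diagonal_mul, trace_mul_cycle, Unitary.coe_star_mul_self, one_mul, trace_diagonal]
  push_cast
  rfl

lemma cfc_id (hA : A.IsHermitian) : hA.cfc (fun x => x) = A := by
  rw [← hA.cfc_eq, cfc_id' ℝ A]

lemma isHermitian_cfc (hA : A.IsHermitian) (f : ℝ → ℝ) : (hA.cfc f).IsHermitian := by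
  rw [← hA.cfc_eq]
  exact cfc_predicate f A

end IsHermitian

lemma PosSemidef.cfc_sqrt_mul_self (hA : A.PosSemidef) :
    hA.1.cfc Real.sqrt * hA.1.cfc Real.sqrt = A := by
  rw [← hA.1.cfc_eq, ← cfc_mul Real.sqrt Real.sqrt A]
  conv_rhs => rw [← cfc_id' ℝ A hA.1.isSelfAdjoint]
  refine cfc_congr fun x hx => Real.mul_self_sqrt ?_
  rw [hA.1.spectrum_real_eq_range_eigenvalues] at hx
  obtain ⟨i, rfl⟩ := hx
  exact hA.eigenvalues_nonneg i

namespace IsHermitian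

lemma re_trace_le_re_trace_cfc_sqrt (X : Matrix n n 𝕜) {H : Matrix n n 𝕜} (hH : H.IsHermitian)
    (hXH : Xᴴ * X = H) : RCLike.re X.trace ≤ RCLike.re (hH.cfc Real.sqrt).trace := by
  subst hXH
  set V : Matrix n n 𝕜 := ↑hH.eigenvectorUnitary
  set Y := star V * X * V
  have hVV : V * star V = 1 := Unitary.coe_mul_star_self _
  have htr : Y.trace = X.trace := by rw [trace_mul_cycle, hVV, one_mul]
  have hYY : Yᴴ * Y = diagonal (RCLike.ofReal ∘ hH.eigenvalues) := by
    rw [← hH.conjStarAlgAut_star_eigenvectorUnitary, Unitary.conjStarAlgAut_star_apply]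
    simp only [Y, ← star_eq_conjTranspose, star_mul, star_star, mul_assoc]
    rw [← mul_assoc V, hVV, one_mul]
  have hcol (j : n) : hH.eigenvalues j = ∑ i, ‖Y i j‖ ^ 2 := by
    have h := conjTranspose_mul_self_apply_self Y j
    rw [hYY, diagonal_apply_eq, Function.comp_apply] at h
    exact_mod_cast h
  have hdiag (j : n) : RCLike.re (Y j j) ≤ √(hH.eigenvalues j) := by
    refine (RCLike.re_le_norm _).trans (Real.le_sqrt_of_sq_le ?_)
    rw [hcol j]
    exact single_le_sum (f := fun i => ‖Y i j‖ ^ 2) (fun i _ => sq_nonneg _) (mem_univ j)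
  calc RCLike.re X.trace = ∑ j, RCLike.re (Y j j) := by rw [← htr, trace, map_sum]; rfl
    _ ≤ ∑ j, √(hH.eigenvalues j) := sum_le_sum fun j _ => hdiag j
    _ = RCLike.re (hH.cfc Real.sqrt).trace := by rw [trace_cfc, RCLike.ofReal_re]

noncomputable def eigenOverlap (hA : A.IsHermitian) (hB : B.IsHermitian) (i j : n) : ℝ :=
  ‖(star (hA.eigenvectorUnitary : Matrix n n 𝕜) * hB.eigenvectorUnitary) i j‖ ^ 2

lemma eigenOverlap_nonneg (hA : A.IsHermitian) (hB : B.IsHermitian) (i j : n) :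
    0 ≤ eigenOverlap hA hB i j :=
  sq_nonneg _

lemma sum_eigenOverlap_right (hA : A.IsHermitian) (hB : B.IsHermitian) (i : n) :
    ∑ j, eigenOverlap hA hB i j = 1 := by
  set M := star (hA.eigenvectorUnitary : Matrix n n 𝕜) * (hB.eigenvectorUnitary : Matrix n n 𝕜)
  have hM : M ∈ unitaryGroup n 𝕜 :=
    mul_mem (Unitary.star_mem (SetLike.coe_mem _)) (SetLike.coe_mem _)
  have h := mul_conjTranspose_self_apply_self M i
  rw [← star_eq_conjTranspose, Unitary.mul_star_self_of_mem hM, one_apply_eq] at h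
  exact_mod_cast h.symm

lemma trace_cfc_mul_cfc (hA : A.IsHermitian) (hB : B.IsHermitian) (f g : ℝ → ℝ) :
    (hA.cfc f * hB.cfc g).trace = ((∑ i, ∑ j, eigenOverlap hA hB i j *
      (f (hA.eigenvalues i) * g (hB.eigenvalues j)) : ℝ) : 𝕜) := by
  set M := star (hA.eigenvectorUnitary : Matrix n n 𝕜) * hB.eigenvectorUnitary
  have hcycle : (hA.cfc f * hB.cfc g).trace = (diagonal (fun i => (f (hA.eigenvalues i) : 𝕜)) *
      M * diagonal (fun j => (g (hB.eigenvalues j) : 𝕜)) * Mᴴ).trace := by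
    rw [cfc_eq_mul_diagonal_mul, cfc_eq_mul_diagonal_mul]
    simp only [M, ← star_eq_conjTranspose, star_mul, star_star, mul_assoc]
    rw [trace_mul_comm]
    simp only [mul_assoc]
  rw [hcycle, trace]
  push_cast
  refine sum_congr rfl fun i _ => ?_
  rw [diag_apply, mul_apply]
  refine sum_congr rfl fun j _ => ?_
  rw [mul_diagonal, diagonal_mul, conjTranspose_apply, RCLike.star_def, eigenOverlap]
  push_cast
  linear_combination ((f (hA.eigenvalues i) : 𝕜) * g (hB.eigenvalues j)) * RCLike.mul_conj (M i j)

noncomputable def nussbaumSzkolaFst (hA : A.IsHermitian) (hB : B.IsHermitian) (p : n × n) : ℝ :=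
  hA.eigenOverlap hB p.1 p.2 * hA.eigenvalues p.1

noncomputable def nussbaumSzkolaSnd (hA : A.IsHermitian) (hB : B.IsHermitian) (p : n × n) : ℝ :=
  hA.eigenOverlap hB p.1 p.2 * hB.eigenvalues p.2

lemma sum_nussbaumSzkolaFst (hA : A.IsHermitian) (hB : B.IsHermitian) :
    ((∑ p, hA.nussbaumSzkolaFst hB p : ℝ) : 𝕜) = A.trace := by
  simp only [Fintype.sum_prod_type, nussbaumSzkolaFst, ← sum_mul, sum_eigenOverlap_right, one_mul]
  exact_mod_cast hA.trace_eq_sum_eigenvalues.symm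

lemma nussbaumSzkolaSnd_pos (hA : A.IsHermitian) (hB : B.PosDef) {p : n × n}
    (hp : 0 < hA.nussbaumSzkolaFst hB.1 p) : 0 < hA.nussbaumSzkolaSnd hB.1 p :=
  mul_pos ((eigenOverlap_nonneg _ _ _ _).lt_of_ne' (left_ne_zero_of_mul hp.ne'))
    (hB.eigenvalues_pos _)

lemma re_trace_sub_trace_eq_sum_nussbaumSzkola (hA : A.IsHermitian) (hB : B.PosDef) :
    RCLike.re ((hA.cfc fun x => x * Real.log x).trace - (A * hB.1.cfc Real.log).trace) =
      ∑ p, hA.nussbaumSzkolaFst hB.1 p *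
        (log (hA.nussbaumSzkolaFst hB.1 p) - log (hA.nussbaumSzkolaSnd hB.1 p)) := by
  have hcross : A * hB.1.cfc Real.log = hA.cfc (fun x => x) * hB.1.cfc Real.log := by
    rw [hA.cfc_id]
  have hdiag (i : n) : hA.eigenvalues i * log (hA.eigenvalues i) =
      ∑ j, hA.eigenOverlap hB.1 i j * (hA.eigenvalues i * log (hA.eigenvalues i)) := by
    rw [← sum_mul, sum_eigenOverlap_right, one_mul]
  rw [hcross, map_sub, trace_cfc, trace_cfc_mul_cfc, RCLike.ofReal_re, RCLike.ofReal_re,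
    Fintype.sum_prod_type, sum_congr rfl fun i _ => hdiag i, ← sum_sub_distrib]
  refine sum_congr rfl fun i _ => ?_
  rw [← sum_sub_distrib]
  refine sum_congr rfl fun j _ => ?_
  have hb : hB.1.eigenvalues j ≠ 0 := (hB.eigenvalues_pos j).ne'
  simp only [nussbaumSzkolaFst, nussbaumSzkolaSnd]
  generalize hA.eigenOverlap hB.1 i j = w, hA.eigenvalues i = a, hB.1.eigenvalues j = b at hb ⊢
  rcases eq_or_ne w 0 with rfl | hw
  · simp
  rcases eq_or_ne a 0 with rfl | ha
  · simp
  rw [log_mul hw ha, log_mul hw hb]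
  ring

end IsHermitian

namespace PosSemidef

lemma nussbaumSzkolaFst_nonneg (hA : A.PosSemidef) (hB : B.IsHermitian) (p : n × n) :
    0 ≤ hA.1.nussbaumSzkolaFst hB p :=
  mul_nonneg (IsHermitian.eigenOverlap_nonneg _ _ _ _) (hA.eigenvalues_nonneg _)

lemma sum_sqrt_nussbaumSzkola_le (hA : A.PosSemidef) (hB : B.PosSemidef)
    (hH : (hB.1.cfc Real.sqrt * A * hB.1.cfc Real.sqrt).IsHermitian) :
    ∑ p, √(hA.1.nussbaumSzkolaFst hB.1 p * hA.1.nussbaumSzkolaSnd hB.1 p) ≤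
      RCLike.re (hH.cfc Real.sqrt).trace := by
  have hsum : ∑ p, √(hA.1.nussbaumSzkolaFst hB.1 p * hA.1.nussbaumSzkolaSnd hB.1 p) =
      RCLike.re (hA.1.cfc Real.sqrt * hB.1.cfc Real.sqrt).trace := by
    rw [IsHermitian.trace_cfc_mul_cfc, RCLike.ofReal_re, Fintype.sum_prod_type]
    refine sum_congr rfl fun i _ => sum_congr rfl fun j _ => ?_
    rw [IsHermitian.nussbaumSzkolaFst, IsHermitian.nussbaumSzkolaSnd, mul_mul_mul_comm,
      sqrt_mul (mul_self_nonneg _), sqrt_mul_self (IsHermitian.eigenOverlap_nonneg _ _ _ _),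
      sqrt_mul (hA.eigenvalues_nonneg i)]
  rw [hsum]
  refine IsHermitian.re_trace_le_re_trace_cfc_sqrt _ hH ?_
  rw [conjTranspose_mul, (hA.1.isHermitian_cfc _).eq, (hB.1.isHermitian_cfc _).eq, mul_assoc,
    ← mul_assoc (hA.1.cfc _), hA.cfc_sqrt_mul_self, ← mul_assoc]

end PosSemidef

end Matrix

theorem relEntropy_ge_neg_two_log_fidelity_general {d : ℕ}
    (ρ σ : Matrix (Fin d) (Fin d) ℂ)
    (hρ : ρ.PosSemidef) (hρtr : ρ.trace = 1)
    (hσ : σ.PosDef)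
    (hinner : (hσ.1.cfc Real.sqrt * ρ * hσ.1.cfc Real.sqrt).IsHermitian) :
    ((hρ.1.cfc fun x => x * Real.log x).trace - (ρ * hσ.1.cfc Real.log).trace).re
      ≥ -2 * Real.log (((hinner.cfc Real.sqrt).trace).re) := by
  set P := hρ.1.nussbaumSzkolaFst hσ.1
  set Q := hρ.1.nussbaumSzkolaSnd hσ.1
  have hP1 : ∑ p, P p = 1 := by
    have h : ((∑ p, P p : ℝ) : ℂ) = 1 := (hρ.1.sum_nussbaumSzkolaFst hσ.1).trans hρtr
    exact_mod_cast h
  have hPQ (p) : 0 < P p → 0 < Q p := hρ.1.nussbaumSzkolaSnd_pos hσ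
  have hF := hρ.sum_sqrt_nussbaumSzkola_le hσ.posSemidef hinner
  calc -2 * log ((hinner.cfc Real.sqrt).trace.re)
      ≤ -2 * log (∑ p, √(P p * Q p)) :=
        mul_le_mul_of_nonpos_left (log_le_log (sum_sqrt_mul_pos P Q hP1 hPQ) hF) (by norm_num)
    _ ≤ ∑ p, P p * (log (P p) - log (Q p)) :=
        neg_two_log_sum_sqrt_mul_le P Q (hρ.nussbaumSzkolaFst_nonneg hσ.1) hP1 hPQ
    _ = _ := (hρ.1.re_trace_sub_trace_eq_sum_nussbaumSzkola hσ).symm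

/-- For density matrices `ρ`, `σ` with `σ` positive definite,
`D(ρ‖σ) ≥ −2 log F(ρ,σ)`, where `F(ρ,σ) = Tr[√(√σ ρ √σ)]` is the quantum fidelity.
Here `Tr[ρ log ρ]` is computed via the functional calculus of `x ↦ x log x` (so the
convention `0 log 0 = 0` handles zero eigenvalues of `ρ`). -/
theorem relEntropy_ge_neg_two_log_fidelity {d : ℕ}
    (ρ σ : Matrix (Fin d) (Fin d) ℂ)
    (hρ : ρ.PosSemidef) (hρtr : ρ.trace = 1)
    (hσ : σ.PosDef) (hσtr : σ.trace = 1)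
    (hinner : (hσ.1.cfc Real.sqrt * ρ * hσ.1.cfc Real.sqrt).IsHermitian) :
    ((hρ.1.cfc fun x => x * Real.log x).trace - (ρ * hσ.1.cfc Real.log).trace).re
      ≥ -2 * Real.log (((hinner.cfc Real.sqrt).trace).re) :=
  relEntropy_ge_neg_two_log_fidelity_general ρ σ hρ hρtr hσ hinner
end
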